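/- For every integer n ≥ 1, the ideal m₂ⁿ (the n-th power of the ideal m₂ = {(a, b, c) ∈ W : a is even} in the ring W) is not a principal ideal of W. -/

import Mathlib

abbrev Rng : Type := ℤ × Zsqrtd 2 × Zsqrtd 3

def Wset : Set Rng :=
  {p | p.1 ≡ p.2.1.re [ZMOD 2] ∧ p.1 ≡ p.2.2.re + p.2.2.im [ZMOD 2] ∧
       p.2.1.im ≡ p.2.2.im [ZMOD 2]}

private lemma modeq_iff (a b : ℤ) : a ≡ b [ZMOD 2] ↔ ((a : ZMod 2) = b) :=
  (ZMod.intCast_eq_intCast_iff a b 2).symm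

def W : Subring Rng where
  carrier := Wset
  zero_mem' := by refine ⟨?_, ?_, ?_⟩ <;> decide
  one_mem' := by refine ⟨?_, ?_, ?_⟩ <;> decide
  add_mem' := by
    rintro a b ⟨h1, h2, h3⟩ ⟨g1, g2, g3⟩
    refine ⟨h1.add g1, ?_, h3.add g3⟩
    simpa [add_add_add_comm] using h2.add g2
  neg_mem' := by
    rintro a ⟨h1, h2, h3⟩
    refine ⟨h1.neg, ?_, h3.neg⟩
    have := h2.neg
    simp only [Wset, Set.mem_setOf_eq, Prod.fst_neg, Prod.snd_neg, Zsqrtd.re_neg,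
      Zsqrtd.im_neg, Int.modEq_iff_dvd] at this ⊢
    omega
  mul_mem' := by
    rintro a b ⟨h1, h2, h3⟩ ⟨g1, g2, g3⟩
    simp only [Wset, Set.mem_setOf_eq, Prod.fst_mul, Prod.snd_mul, Zsqrtd.re_mul,
      Zsqrtd.im_mul, modeq_iff] at h1 h2 h3 g1 g2 g3 ⊢
    push_cast at h1 h2 h3 g1 g2 g3 ⊢
    have h0 : (2 : ZMod 2) = 0 := rfl
    refine ⟨?_, ?_, ?_⟩
    · rw [← h1, ← g1, h0]; ring
    · linear_combination (b.1 : ZMod 2) * h2 + ((a.2.2.re : ZMod 2) + a.2.2.im) * g2 -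
        ((a.2.2.im : ZMod 2) * b.2.2.im) * h0
    · linear_combination (b.2.1.im : ZMod 2) * h2 - (b.2.1.im : ZMod 2) * h1
        + (b.2.1.re : ZMod 2) * h3 + ((a.2.2.re : ZMod 2) + a.2.2.im) * g3
        + (a.2.2.im : ZMod 2) * g2 - (a.2.2.im : ZMod 2) * g1
        + ((a.2.2.im : ZMod 2) * b.2.2.im) * h0

lemma mem_W_iff (x : Rng) : x ∈ W ↔ x ∈ Wset := Iff.rfl

/-- The ideal `m₂ = {(a, b, c) ∈ W : a is even}` of `W`. -/
def m2 : Ideal W where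
  carrier := {x | Even ((x : Rng).1)}
  zero_mem' := Even.zero
  add_mem' := fun hx hy => hx.add hy
  smul_mem' := fun c x hx => hx.mul_left ((c : Rng).1)

/-!
The residue ring `W/m₂` is `𝔽₂`. If `m₂ⁿ = (g)`, every element of `m₂ⁿ` outside `m₂ⁿ⁺¹` is
`u * g` with `u ∉ m₂`, so `u ≡ 1`, and any two such elements differ by an element of `m₂ⁿ⁺¹`.
Membership in `m₂ᵏ` forces `2ᵏ ∣ a` and `√2ᵏ ∣ b` for the first two coordinates, so with
`p = (2, 0, 0)` and `q = (0, √2, 1 + √3)` none of `pⁿ`, `qⁿ`, `pⁿ - qⁿ` lies in `m₂ⁿ⁺¹`.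
-/

section

variable {R S : Type*} [CommRing R] [CommRing S]

theorem Ideal.not_isPrincipal_pow_of_sub_one_mem {m : Ideal R} (hm : ∀ x, x ∈ m ∨ x - 1 ∈ m)
    {n : ℕ} {a b : R} (ha : a ∈ m ^ n) (hb : b ∈ m ^ n) (ha' : a ∉ m ^ (n + 1))
    (hb' : b ∉ m ^ (n + 1)) (hab : a - b ∉ m ^ (n + 1)) : ¬ (m ^ n).IsPrincipal := by
  rintro ⟨g, hg⟩
  have hg_mem : g ∈ m ^ n := hg ▸ Ideal.mem_span_singleton_self g
  have mul_mem : ∀ w ∈ m, w * g ∈ m ^ (n + 1) := fun w hw =>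
    pow_succ' m n ▸ Ideal.mul_mem_mul hw hg_mem
  obtain ⟨u, rfl⟩ := Ideal.mem_span_singleton'.mp (hg ▸ ha)
  obtain ⟨v, rfl⟩ := Ideal.mem_span_singleton'.mp (hg ▸ hb)
  rcases hm u with hu | hu
  · exact ha' (mul_mem u hu)
  rcases hm v with hv | hv
  · exact hb' (mul_mem v hv)
  rw [← sub_mul] at hab
  exact hab (mul_mem _ (by simpa using sub_mem hu hv))

theorem Ideal.pow_dvd_of_mem_pow {f : R →+* S} {m : Ideal R} {s : S}
    (h : m ≤ (Ideal.span {s}).comap f) {k : ℕ} {x : R} (hx : x ∈ m ^ k) : s ^ k ∣ f x := by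
  rw [← Ideal.mem_span_singleton, ← Ideal.span_singleton_pow]
  exact (Ideal.pow_right_mono h k).trans (Ideal.le_comap_pow f k) hx

theorem Ideal.notMem_pow_succ_of_associated [IsDomain S] {f : R →+* S} {m : Ideal R} {s : S}
    (h : m ≤ (Ideal.span {s}).comap f) (hs₀ : s ≠ 0) (hs : ¬IsUnit s) {n : ℕ} {x : R}
    (hx : Associated (f x) (s ^ n)) : x ∉ m ^ (n + 1) := fun hmem =>
  absurd ((pow_dvd_pow_iff hs₀ hs).mp ((Ideal.pow_dvd_of_mem_pow h hmem).trans hx.dvd))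
    (by omega)

end

instance : Zsqrtd.Nonsquare 2 := ⟨fun n h => by
  rcases Nat.lt_or_ge n 2 with hn | hn
  · interval_cases n <;> omega
  · nlinarith⟩

instance : IsDomain (Zsqrtd 2) := inferInstanceAs (IsDomain (Zsqrtd ((2 : ℕ) : ℤ)))

lemma Zsqrtd.sqrtd_two_ne_zero : (Zsqrtd.sqrtd : Zsqrtd 2) ≠ 0 := by decide

lemma Zsqrtd.not_isUnit_sqrtd_two : ¬IsUnit (Zsqrtd.sqrtd : Zsqrtd 2) := by
  rw [Zsqrtd.isUnit_iff_norm_isUnit]; decide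

def W.toInt : W →+* ℤ := (RingHom.fst _ _).comp W.subtype

def W.toZsqrtdTwo : W →+* Zsqrtd 2 := ((RingHom.fst _ _).comp (RingHom.snd _ _)).comp W.subtype

lemma m2_le_comap_toInt : m2 ≤ (Ideal.span {2}).comap W.toInt := fun _ hx =>
  Ideal.mem_span_singleton.mpr (even_iff_two_dvd.mp hx)

lemma m2_le_comap_toZsqrtdTwo : m2 ≤ (Ideal.span {Zsqrtd.sqrtd}).comap W.toZsqrtdTwo := by
  intro x hx
  obtain ⟨h₁, -, -⟩ := x.2
  obtain ⟨s, hs⟩ : (2 : ℤ) ∣ (x : Rng).2.1.re := by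
    have : (x : Rng).1 % 2 = (x : Rng).2.1.re % 2 := h₁
    have : (x : Rng).1 % 2 = 0 := Int.even_iff.mp hx
    omega
  refine Ideal.mem_span_singleton'.mpr ⟨⟨(x : Rng).2.1.im, s⟩, ?_⟩
  ext <;> simp [W.toZsqrtdTwo, hs]

lemma mem_m2_or_sub_one_mem_m2 (x : W) : x ∈ m2 ∨ x - 1 ∈ m2 := by
  rcases Int.even_or_odd (x : Rng).1 with h | h
  · exact Or.inl h
  · exact Or.inr (h.sub_odd odd_one)

def pW : W := ⟨(2, 0, 0), by refine ⟨?_, ?_, ?_⟩ <;> decide⟩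

def qW : W := ⟨(0, Zsqrtd.sqrtd, ⟨1, 1⟩), by refine ⟨?_, ?_, ?_⟩ <;> decide⟩

lemma pW_mem_m2 : pW ∈ m2 := ⟨1, rfl⟩

lemma qW_mem_m2 : qW ∈ m2 := ⟨0, rfl⟩

/-- For every `n ≥ 1`, the `n`-th power of the ideal `m₂` of `W` is not principal. -/
theorem stmt8 : ∀ n : ℕ, 1 ≤ n → ¬ (m2 ^ n).IsPrincipal := by
  intro n hn
  have hp : W.toInt (pW ^ n) = 2 ^ n := map_pow W.toInt pW n
  have hq : W.toZsqrtdTwo (qW ^ n) = Zsqrtd.sqrtd ^ n := map_pow W.toZsqrtdTwo qW n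
  have hpq : W.toZsqrtdTwo (pW ^ n - qW ^ n) = -Zsqrtd.sqrtd ^ n := by
    rw [map_sub, hq, map_pow, show W.toZsqrtdTwo pW = 0 from rfl, zero_pow (by omega), zero_sub]
  refine Ideal.not_isPrincipal_pow_of_sub_one_mem mem_m2_or_sub_one_mem_m2
    (Ideal.pow_mem_pow pW_mem_m2 n) (Ideal.pow_mem_pow qW_mem_m2 n) ?_ ?_ ?_
  · exact Ideal.notMem_pow_succ_of_associated m2_le_comap_toInt two_ne_zero
      (by decide) (hp ▸ .refl _)
  · exact Ideal.notMem_pow_succ_of_associated m2_le_comap_toZsqrtdTwo Zsqrtd.sqrtd_two_ne_zero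
      Zsqrtd.not_isUnit_sqrtd_two (hq ▸ .refl _)
  · exact Ideal.notMem_pow_succ_of_associated m2_le_comap_toZsqrtdTwo Zsqrtd.sqrtd_two_ne_zero
      Zsqrtd.not_isUnit_sqrtd_two (hpq ▸ (Associated.refl _).neg_left)
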